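/- Let g : [0, l] → ℂ be an arclength parametrization of a curve (|g'| = 1) whose derivative g' has modulus of continuity ω, i.e., |g'(s) − g'(t)| ≤ ω(|s − t|). Define 𝒦(s,t) = Re[conj(g(t) − g(s)) · i g'(s)]. Then |𝒦(s,t)| ≤ ∫₀^{|s−t|} ω(τ) dτ. -/

import Mathlib

open Complex

/-!
Fix `s` and regard `𝒦(s, ·)` as a real function of `t`. It vanishes at `t = s`, and its
derivative `Re[conj(g'(t)) · i g'(s)]` equals `Re[conj(g'(t) − g'(s)) · i g'(s)]` because
`conj(w) · i w = i |w|²` is purely imaginary. Hence the derivative at `t` is bounded by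
`|g'(t) − g'(s)| ≤ ω(|t − s|)`, and integrating this bound from `s` to `t` gives the estimate.
-/

open Set MeasureTheory intervalIntegral

section MeanValue

variable {F F' φ ω : ℝ → ℝ}

theorem abs_sub_le_integral_of_abs_deriv_le {a b : ℝ} (hab : a ≤ b)
    (hF : ∀ x ∈ Icc a b, HasDerivAt F (F' x) x) (hφ : IntegrableOn φ (Icc a b))
    (hle : ∀ x ∈ Ioo a b, |F' x| ≤ φ x) :
    |F b - F a| ≤ ∫ x in a..b, φ x := by
  have hcont : ContinuousOn F (Icc a b) := fun x hx => (hF x hx).continuousAt.continuousWithinAt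
  have hderiv (x) (hx : x ∈ Ioo a b) : HasDerivAt F (F' x) x := hF x (Ioo_subset_Icc_self hx)
  have upper : F b - F a ≤ ∫ x in a..b, φ x :=
    sub_le_integral_of_hasDeriv_right_of_le hab hcont
      (fun x hx => (hderiv x hx).hasDerivWithinAt) hφ fun x hx => (abs_le.1 (hle x hx)).2
  have lower : -F b - -F a ≤ ∫ x in a..b, φ x :=
    sub_le_integral_of_hasDeriv_right_of_le hab hcont.neg
      (fun x hx => (hderiv x hx).neg.hasDerivWithinAt) hφ
      fun x hx => neg_le.1 (abs_le.1 (hle x hx)).1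
  exact abs_le.2 ⟨by linarith, upper⟩

theorem abs_sub_le_integral_modulus_of_le {s t : ℝ} (hst : s ≤ t)
    (hF : ∀ x ∈ Icc s t, HasDerivAt F (F' x) x) (hω : MonotoneOn ω (Icc 0 (t - s)))
    (hle : ∀ x ∈ Icc s t, |F' x| ≤ ω |x - s|) :
    |F t - F s| ≤ ∫ τ in 0..t - s, ω τ := by
  have hshift : MonotoneOn (fun x => ω (x - s)) (Icc s t) := fun x hx y hy hxy =>
    hω ⟨by linarith [hx.1], by linarith [hx.2]⟩ ⟨by linarith [hy.1], by linarith [hy.2]⟩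
      (by linarith)
  have key := abs_sub_le_integral_of_abs_deriv_le hst hF
    (hshift.integrableOn_isCompact isCompact_Icc) fun x hx => by
      simpa only [abs_of_nonneg (sub_nonneg.2 hx.1.le)] using hle x (Ioo_subset_Icc_self hx)
  simpa only [integral_comp_sub_right, sub_self] using key

theorem abs_sub_le_integral_modulus {s t : ℝ}
    (hF : ∀ x ∈ uIcc s t, HasDerivAt F (F' x) x) (hω : MonotoneOn ω (Icc 0 |t - s|))
    (hle : ∀ x ∈ uIcc s t, |F' x| ≤ ω |x - s|) :
    |F t - F s| ≤ ∫ τ in 0..|t - s|, ω τ := by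
  rcases le_total s t with hst | hts
  · rw [abs_of_nonneg (sub_nonneg.2 hst)] at hω ⊢
    exact abs_sub_le_integral_modulus_of_le hst (fun x hx => hF x (Icc_subset_uIcc hx)) hω
      fun x hx => hle x (Icc_subset_uIcc hx)
  -- reflect `x ↦ -x` to reduce to the case `s ≤ t`
  · have hmem {x : ℝ} (hx : x ∈ Icc (-s) (-t)) : -x ∈ uIcc s t :=
      Icc_subset_uIcc' ⟨le_neg.1 hx.2, neg_le.1 hx.1⟩
    have key := abs_sub_le_integral_modulus_of_le (F := fun x => F (-x)) (F' := fun x => -F' (-x))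
      (neg_le_neg hts) (fun x hx => by
        have h := (hF (-x) (hmem hx)).scomp x (hasDerivAt_neg' x)
        rwa [neg_one_smul] at h)
      (by rwa [neg_sub_neg, ← abs_of_nonneg (sub_nonneg.2 hts), abs_sub_comm])
      fun x hx => by
        simpa only [abs_neg, sub_neg_eq_add, ← abs_sub_comm (-x) s, neg_sub_left, add_comm]
          using hle (-x) (hmem hx)
    simpa only [neg_neg, neg_sub_neg, abs_sub_comm t s, abs_of_nonneg (sub_nonneg.2 hts)]
      using key

end MeanValue

section Kernel

/-- The kernel `𝒦(s, t)` of the paper. -/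
def curveKernel (g g' : ℝ → ℂ) (s t : ℝ) : ℝ :=
  (starRingEnd ℂ (g t - g s) * (I * g' s)).re

theorem abs_re_conj_mul_I_mul_le_norm_sub (z w : ℂ) :
    |(starRingEnd ℂ z * (I * w)).re| ≤ ‖z - w‖ * ‖w‖ := by
  have hself : (starRingEnd ℂ w * (I * w)).re = 0 := by
    simp only [mul_re, mul_im, conj_re, conj_im, I_re, I_im]; ring
  have hsplit : starRingEnd ℂ z * (I * w) =
      starRingEnd ℂ (z - w) * (I * w) + starRingEnd ℂ w * (I * w) := by
    rw [map_sub]; ring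
  calc |(starRingEnd ℂ z * (I * w)).re|
      = |(starRingEnd ℂ (z - w) * (I * w)).re| := by rw [hsplit, add_re, hself, add_zero]
    _ ≤ ‖starRingEnd ℂ (z - w) * (I * w)‖ := abs_re_le_norm _
    _ = ‖z - w‖ * ‖w‖ := by rw [norm_mul, norm_mul, norm_conj, norm_I, one_mul]

theorem hasDerivAt_curveKernel {g g' : ℝ → ℂ} {s t : ℝ} (hg : HasDerivAt g (g' t) t) :
    HasDerivAt (curveKernel g g' s) (starRingEnd ℂ (g' t) * (I * g' s)).re t :=
  reCLM.hasFDerivAt.comp_hasDerivAt t (((hg.sub_const (g s)).star).mul_const (I * g' s))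

end Kernel

theorem stmt_9_general (l : ℝ) (g g' : ℝ → ℂ) (ω : ℝ → ℝ)
    (hg : ∀ s ∈ Set.Icc (0:ℝ) l, HasDerivAt g (g' s) s)
    (hunit : ∀ s ∈ Set.Icc (0:ℝ) l, ‖g' s‖ = 1)
    (hωmono : MonotoneOn ω (Set.Icc (0:ℝ) l))
    (hmod : ∀ s ∈ Set.Icc (0:ℝ) l, ∀ t ∈ Set.Icc (0:ℝ) l,
      ‖g' s - g' t‖ ≤ ω |s - t|) :
    ∀ s ∈ Set.Icc (0:ℝ) l, ∀ t ∈ Set.Icc (0:ℝ) l,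
      |(((starRingEnd ℂ) (g t - g s)) * (Complex.I * g' s)).re| ≤
        ∫ τ in (0:ℝ)..|s - t|, ω τ := by
  intro s hs t ht
  have hsub : uIcc s t ⊆ Icc 0 l := uIcc_subset_Icc hs ht
  have hdist : |t - s| ≤ l := abs_sub_le_iff.2 ⟨by linarith [ht.2, hs.1], by linarith [hs.2, ht.1]⟩
  have key := abs_sub_le_integral_modulus (F := curveKernel g g' s)
    (fun x hx => hasDerivAt_curveKernel (hg x (hsub hx)))
    (hωmono.mono (Icc_subset_Icc_right hdist)) fun x hx =>
      (abs_re_conj_mul_I_mul_le_norm_sub _ _).trans <| by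
        rw [hunit s hs, mul_one]; exact hmod x (hsub hx) s hs
  simpa only [curveKernel, sub_self, map_zero, zero_mul, zero_re, sub_zero, abs_sub_comm t s]
    using key

/-- Kernel estimate (Lemma 2.2): for an arclength parametrization `g` whose derivative
has modulus of continuity `ω`, the kernel `𝒦(s,t) = Re[conj(g(t)−g(s))·i g'(s)]`
satisfies `|𝒦(s,t)| ≤ ∫₀^{|s−t|} ω`. -/
theorem stmt_9 (l : ℝ) (hl : 0 < l) (g g' : ℝ → ℂ) (ω : ℝ → ℝ)
    (hg : ∀ s ∈ Set.Icc (0:ℝ) l, HasDerivAt g (g' s) s)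
    (hunit : ∀ s ∈ Set.Icc (0:ℝ) l, ‖g' s‖ = 1)
    (hωmono : MonotoneOn ω (Set.Icc (0:ℝ) l))
    (hω0 : ∀ t ∈ Set.Icc (0:ℝ) l, 0 ≤ ω t)
    (hmod : ∀ s ∈ Set.Icc (0:ℝ) l, ∀ t ∈ Set.Icc (0:ℝ) l,
      ‖g' s - g' t‖ ≤ ω |s - t|) :
    ∀ s ∈ Set.Icc (0:ℝ) l, ∀ t ∈ Set.Icc (0:ℝ) l,
      |(((starRingEnd ℂ) (g t - g s)) * (Complex.I * g' s)).re| ≤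
        ∫ τ in (0:ℝ)..|s - t|, ω τ :=
  stmt_9_general l g g' ω hg hunit hωmono hmod
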